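/- (Gram–Charlier swaption price formula.) For all reals ν, B, c, μ3, μ4, the Gram–Charlier price PS₁ := ν·B·∫_c^∞ (z − c) g₁(z) dz satisfies PS₁ = ν·B·(φ(c) − c·(1 − Φ(c))) + ν·B·φ(c)·( (μ3/6)·c + ((μ4 − 3)/24)·(c² − 1) ), i.e., it equals the Bachelier price plus an explicit skewness–kurtosis correction. -/

import Mathlib

/-!
Since `H n * φ = φ⁽ⁿ⁾`, the density is `g₁ = φ - (μ3/6) φ⁽³⁾ + ((μ4 - 3)/24) φ⁽⁴⁾`. Every
derivative of `φ` is a polynomial times `φ`, so `(z - c) φ⁽ⁿ⁺¹⁾(z) - φ⁽ⁿ⁾(z)`, an antiderivative of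
`(z - c) φ⁽ⁿ⁺²⁾(z)`, vanishes at `+∞`, giving `∫_c^∞ (z - c) φ⁽ⁿ⁺²⁾(z) dz = φ⁽ⁿ⁾(c)`. The `φ` term
gives the Bachelier price `φ(c) - c (1 - Φ(c))`, and `φ'(c) = -c φ(c)`, `φ''(c) = (c² - 1) φ(c)`.
-/

open MeasureTheory Real Set

/-- The standard normal density `φ(z) = (2π)^(−1/2) exp(−z²/2)`. -/
noncomputable def φ (z : ℝ) : ℝ := (Real.sqrt (2 * Real.pi))⁻¹ * Real.exp (-z ^ 2 / 2)

/-- The standard normal cumulative distribution function `Φ(x) = ∫_{−∞}^x φ(y) dy`. -/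
noncomputable def Φ (x : ℝ) : ℝ := ∫ y in Set.Iic x, φ y

/-- The Hermite polynomials defined by `H n z * φ z = φ⁽ⁿ⁾ z`. -/
noncomputable def H (n : ℕ) (z : ℝ) : ℝ := iteratedDeriv n φ z / φ z

/-- The fourth-order Gram–Charlier density with skewness `μ3` and kurtosis `μ4`. -/
noncomputable def g₁ (μ3 μ4 z : ℝ) : ℝ :=
  φ z * (1 - μ3 / 6 * H 3 z + (μ4 - 3) / 24 * H 4 z)

open Filter Polynomial Topology

lemma φ_pos (z : ℝ) : 0 < φ z := by
  unfold φ
  positivity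

lemma φ_eq_mul_exp (z : ℝ) : φ z = (√(2 * π))⁻¹ * exp (-(1 / 2) * z ^ 2) := by
  rw [φ]
  ring_nf

lemma hasDerivAt_φ (z : ℝ) : HasDerivAt φ (-z * φ z) z := by
  have h : HasDerivAt (fun y : ℝ => -y ^ 2 / 2) (-z) z :=
    ((hasDerivAt_pow 2 z).neg.div_const 2).congr_deriv (by push_cast; ring)
  unfold φ
  exact (h.exp.const_mul _).congr_deriv (by ring)

lemma integral_φ : ∫ z, φ z = 1 := by
  simp_rw [φ_eq_mul_exp]
  rw [integral_const_mul, integral_gaussian, show π / (1 / 2) = 2 * π by ring]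
  exact inv_mul_cancel₀ (by positivity)

lemma integrable_pow_mul_φ (n : ℕ) : Integrable (fun z => z ^ n * φ z) := by
  have h := integrable_rpow_mul_exp_neg_mul_sq (b := 1 / 2) (by norm_num)
    (s := n) (by linarith [n.cast_nonneg (α := ℝ)])
  simp_rw [rpow_natCast] at h
  simpa only [φ_eq_mul_exp, mul_left_comm] using h.const_mul (√(2 * π))⁻¹

lemma integrable_φ : Integrable φ := by
  simpa using integrable_pow_mul_φ 0

lemma integrable_mul_φ : Integrable fun z => z * φ z := by
  simpa using integrable_pow_mul_φ 1

lemma tendsto_pow_mul_φ_atTop (n : ℕ) : Tendsto (fun z => z ^ n * φ z) atTop (𝓝 0) := by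
  have h := (rpow_mul_exp_neg_mul_sq_isLittleO_exp_neg one_half_pos n).tendsto_zero_of_tendsto
    (tendsto_exp_atBot.comp (tendsto_id.const_mul_atTop_of_neg (by norm_num)))
  simp_rw [rpow_natCast] at h
  simpa only [φ_eq_mul_exp, mul_left_comm, mul_zero] using h.const_mul (√(2 * π))⁻¹

lemma integrable_eval_mul_φ (p : ℝ[X]) : Integrable (fun z => p.eval z * φ z) := by
  induction p using Polynomial.induction_on' with
  | add p q hp hq =>
    simp only [eval_add, add_mul]
    exact hp.add hq
  | monomial n a => simpa only [eval_monomial, mul_assoc] using (integrable_pow_mul_φ n).const_mul a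

lemma tendsto_eval_mul_φ_atTop (p : ℝ[X]) : Tendsto (fun z => p.eval z * φ z) atTop (𝓝 0) := by
  induction p using Polynomial.induction_on' with
  | add p q hp hq => simpa only [eval_add, add_mul, add_zero] using hp.add hq
  | monomial n a =>
    simpa only [eval_monomial, mul_assoc, mul_zero] using (tendsto_pow_mul_φ_atTop n).const_mul a

lemma hasDerivAt_eval_mul_φ (p : ℝ[X]) (z : ℝ) :
    HasDerivAt (fun z => p.eval z * φ z) ((derivative p - X * p).eval z * φ z) z := by
  refine ((p.hasDerivAt z).mul (hasDerivAt_φ z)).congr_deriv ?_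
  simp only [eval_sub, eval_mul, eval_X]
  ring

lemma exists_iteratedDeriv_φ_eq (n : ℕ) :
    ∃ p : ℝ[X], iteratedDeriv n φ = fun z => p.eval z * φ z := by
  induction n with
  | zero => exact ⟨1, by simp⟩
  | succ n ih =>
    obtain ⟨p, hp⟩ := ih
    refine ⟨derivative p - X * p, funext fun z => ?_⟩
    rw [iteratedDeriv_succ, hp]
    exact (hasDerivAt_eval_mul_φ p z).deriv

lemma hasDerivAt_iteratedDeriv_φ (n : ℕ) (z : ℝ) :
    HasDerivAt (iteratedDeriv n φ) (iteratedDeriv (n + 1) φ z) z := by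
  obtain ⟨p, hp⟩ := exists_iteratedDeriv_φ_eq n
  rw [iteratedDeriv_succ, hp]
  exact (hasDerivAt_eval_mul_φ p z).differentiableAt.hasDerivAt

lemma integrable_sub_mul_iteratedDeriv_φ (c : ℝ) (n : ℕ) :
    Integrable (fun z => (z - c) * iteratedDeriv n φ z) := by
  obtain ⟨p, hp⟩ := exists_iteratedDeriv_φ_eq n
  have h := integrable_eval_mul_φ ((X - C c) * p)
  simp only [eval_mul, eval_sub, eval_X, eval_C, mul_assoc] at h
  rwa [hp]

lemma tendsto_sub_mul_iteratedDeriv_φ_atTop (c : ℝ) (n : ℕ) :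
    Tendsto (fun z => (z - c) * iteratedDeriv n φ z) atTop (𝓝 0) := by
  obtain ⟨p, hp⟩ := exists_iteratedDeriv_φ_eq n
  have h := tendsto_eval_mul_φ_atTop ((X - C c) * p)
  simp only [eval_mul, eval_sub, eval_X, eval_C, mul_assoc] at h
  rwa [hp]

lemma tendsto_iteratedDeriv_φ_atTop (n : ℕ) : Tendsto (iteratedDeriv n φ) atTop (𝓝 0) := by
  obtain ⟨p, hp⟩ := exists_iteratedDeriv_φ_eq n
  simpa only [hp] using tendsto_eval_mul_φ_atTop p

lemma integral_Ioi_sub_mul_iteratedDeriv_φ (n : ℕ) (c : ℝ) :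
    ∫ z in Ioi c, (z - c) * iteratedDeriv (n + 2) φ z = iteratedDeriv n φ c := by
  have hG (z : ℝ) : HasDerivAt (fun z => (z - c) * iteratedDeriv (n + 1) φ z - iteratedDeriv n φ z)
      ((z - c) * iteratedDeriv (n + 2) φ z) z :=
    (((hasDerivAt_id z).sub_const c).mul (hasDerivAt_iteratedDeriv_φ (n + 1) z)).sub
      (hasDerivAt_iteratedDeriv_φ n z) |>.congr_deriv (by simp)
  rw [integral_Ioi_of_hasDerivAt_of_tendsto' (fun z _ => hG z)
    (integrable_sub_mul_iteratedDeriv_φ c (n + 2)).integrableOn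
    ((tendsto_sub_mul_iteratedDeriv_φ_atTop c (n + 1)).sub (tendsto_iteratedDeriv_φ_atTop n))]
  ring

lemma integral_Ioi_φ (c : ℝ) : ∫ z in Ioi c, φ z = 1 - Φ c := by
  rw [← integral_φ, Φ, ← intervalIntegral.integral_Iic_add_Ioi integrable_φ.integrableOn
    integrable_φ.integrableOn]
  ring

lemma integral_Ioi_mul_φ (c : ℝ) : ∫ z in Ioi c, z * φ z = φ c := by
  have hφ' (z : ℝ) : HasDerivAt (fun z => -φ z) (z * φ z) z :=
    (hasDerivAt_φ z).neg.congr_deriv (by ring)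
  rw [integral_Ioi_of_hasDerivAt_of_tendsto' (fun z _ => hφ' z)
    integrable_mul_φ.integrableOn (tendsto_iteratedDeriv_φ_atTop 0).neg]
  simp

lemma integral_Ioi_sub_mul_φ (c : ℝ) :
    ∫ z in Ioi c, (z - c) * φ z = φ c - c * (1 - Φ c) := by
  simp_rw [sub_mul]
  rw [integral_sub integrable_mul_φ.integrableOn (integrable_φ.const_mul c).integrableOn,
    integral_const_mul, integral_Ioi_mul_φ, integral_Ioi_φ]

lemma iteratedDeriv_φ_eq_H_mul (n : ℕ) (z : ℝ) : iteratedDeriv n φ z = H n z * φ z :=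
  (div_mul_cancel₀ _ (φ_pos z).ne').symm

lemma g₁_eq (μ3 μ4 z : ℝ) :
    g₁ μ3 μ4 z = φ z - μ3 / 6 * iteratedDeriv 3 φ z + (μ4 - 3) / 24 * iteratedDeriv 4 φ z := by
  rw [g₁, iteratedDeriv_φ_eq_H_mul, iteratedDeriv_φ_eq_H_mul]
  ring

lemma iteratedDeriv_one_φ : iteratedDeriv 1 φ = fun z => -z * φ z := by
  rw [iteratedDeriv_one]
  exact funext fun z => (hasDerivAt_φ z).deriv

lemma iteratedDeriv_two_φ (z : ℝ) : iteratedDeriv 2 φ z = (z ^ 2 - 1) * φ z := by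
  rw [iteratedDeriv_succ, iteratedDeriv_one_φ]
  exact ((hasDerivAt_id z).neg.mul (hasDerivAt_φ z)).deriv.trans (by simp; ring)

lemma integral_Ioi_sub_mul_g₁ (μ3 μ4 c : ℝ) :
    ∫ z in Ioi c, (z - c) * g₁ μ3 μ4 z =
      φ c - c * (1 - Φ c) - μ3 / 6 * iteratedDeriv 1 φ c + (μ4 - 3) / 24 * iteratedDeriv 2 φ c := by
  have hI (n : ℕ) : IntegrableOn (fun z => (z - c) * iteratedDeriv n φ z) (Ioi c) :=
    (integrable_sub_mul_iteratedDeriv_φ c n).integrableOn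
  have hI0 : IntegrableOn (fun z => (z - c) * φ z) (Ioi c) := by simpa using hI 0
  simp_rw [g₁_eq, mul_add, mul_sub, mul_left_comm (_ - c)]
  rw [integral_add, integral_sub, integral_const_mul, integral_const_mul, integral_Ioi_sub_mul_φ,
    integral_Ioi_sub_mul_iteratedDeriv_φ 1, integral_Ioi_sub_mul_iteratedDeriv_φ 2]
  · ring
  exacts [hI0, (hI 3).const_mul _, hI0.sub ((hI 3).const_mul _), (hI 4).const_mul _]

/-- Gram–Charlier swaption price formula: the Gram–Charlier price equals the Bachelier
price plus an explicit skewness–kurtosis correction. -/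
theorem gram_charlier_price (ν B c μ3 μ4 : ℝ) :
    ν * B * (∫ z in Set.Ioi c, (z - c) * g₁ μ3 μ4 z) =
      ν * B * (φ c - c * (1 - Φ c)) +
        ν * B * φ c * (μ3 / 6 * c + (μ4 - 3) / 24 * (c ^ 2 - 1)) := by
  rw [integral_Ioi_sub_mul_g₁, iteratedDeriv_one_φ, iteratedDeriv_two_φ]
  ring
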